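/- On the unit sphere S², suppose a triangle has vertices ȳ, p̄', z̄ with side lengths l₁' = d(p̄',ȳ), l₂' = d(p̄',z̄), l₀' = d(ȳ,z̄) satisfying l₀' ≥ l₁' + l₂' − 3ε, with 0 < l₁', l₂' < π/2 and 3ε < l₁' + l₂' < π. Then the angle at p̄' satisfies cos∠p̄' < −cos 3ε + (cot l₁' + cot l₂') sin 3ε + cot l₁' · cot l₂' · (1 − cos 3ε). -/

import Mathlib

open Real
open Real

/-- Geodesic (great-circle) distance between unit vectors of `ℝ³`, i.e. on `S²(1)`. -/
noncomputable def sDist (x y : EuclideanSpace ℝ (Fin 3)) : ℝ := InnerProductGeometry.angle x y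

/-- The spherical angle at the vertex `m` of the geodesic triangle `(a, m, b)` on `S²(1)`:
the angle between the projections of `a` and `b` to the tangent plane at `m`. -/
noncomputable def sAngle (m a b : EuclideanSpace ℝ (Fin 3)) : ℝ :=
  InnerProductGeometry.angle (a - (inner ℝ a m : ℝ) • m) (b - (inner ℝ b m : ℝ) • m)

/-!
By the spherical law of cosines, `sin l₁' sin l₂' cos ∠p̄' = cos l₀' - cos l₁' cos l₂'`, and
`cos l₀' ≤ cos (l₁' + l₂' - 3ε)` since cosine decreases on `[0, π]`. Expanding
`cos (l₁' + l₂' - 3ε)` and dividing by `sin l₁' sin l₂' > 0` bounds `cos ∠p̄'` by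
`-cos 3ε + (cot l₁' + cot l₂') sin 3ε - cot l₁' cot l₂' (1 - cos 3ε)`, and the last term is
negative because both sides are shorter than `π / 2`.
-/

namespace InnerProductGeometry

variable {V : Type*} [NormedAddCommGroup V] [InnerProductSpace ℝ V]

theorem inner_sub_inner_smul_sub_inner_smul {m : V} (hm : ‖m‖ = 1) (a b : V) :
    inner ℝ (a - inner ℝ a m • m) (b - inner ℝ b m • m) =
      inner ℝ a b - inner ℝ a m * inner ℝ b m := by
  simp only [inner_sub_left, inner_sub_right, real_inner_smul_left, real_inner_smul_right,
    inner_self_eq_one_of_norm_eq_one hm, real_inner_comm m]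
  ring

theorem norm_sub_inner_smul_eq_sin_angle {m a : V} (hm : ‖m‖ = 1) (ha : ‖a‖ = 1) :
    ‖a - inner ℝ a m • m‖ = Real.sin (angle m a) := by
  have hsin := sin_angle_mul_norm_mul_norm m a
  rw [hm, ha, mul_one, mul_one, real_inner_self_eq_norm_sq, real_inner_self_eq_norm_sq, hm, ha,
    real_inner_comm] at hsin
  rw [hsin, ← Real.sqrt_sq (norm_nonneg _), ← real_inner_self_eq_norm_sq,
    inner_sub_inner_smul_sub_inner_smul hm, real_inner_self_eq_norm_sq, ha]
  ring_nf

/-- The spherical law of cosines for the triangle `(a, m, b)` on the unit sphere. -/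
theorem sin_angle_mul_sin_angle_mul_cos_angle_proj {m a b : V} (hm : ‖m‖ = 1) (ha : ‖a‖ = 1)
    (hb : ‖b‖ = 1) :
    Real.sin (angle m a) * Real.sin (angle m b) *
        Real.cos (angle (a - inner ℝ a m • m) (b - inner ℝ b m • m)) =
      Real.cos (angle a b) - Real.cos (angle m a) * Real.cos (angle m b) := by
  rw [← norm_sub_inner_smul_eq_sin_angle hm ha, ← norm_sub_inner_smul_eq_sin_angle hm hb,
    mul_comm, cos_angle_mul_norm_mul_norm, inner_sub_inner_smul_sub_inner_smul hm,
    ← inner_eq_cos_angle_of_norm_eq_one ha hb, ← inner_eq_cos_angle_of_norm_eq_one hm ha,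
    ← inner_eq_cos_angle_of_norm_eq_one hm hb, real_inner_comm m, real_inner_comm m]

end InnerProductGeometry

theorem sin_sDist_mul_sin_sDist_mul_cos_sAngle {m a b : EuclideanSpace ℝ (Fin 3)}
    (hm : ‖m‖ = 1) (ha : ‖a‖ = 1) (hb : ‖b‖ = 1) :
    Real.sin (sDist m a) * Real.sin (sDist m b) * Real.cos (sAngle m a b) =
      Real.cos (sDist a b) - Real.cos (sDist m a) * Real.cos (sDist m b) :=
  InnerProductGeometry.sin_angle_mul_sin_angle_mul_cos_angle_proj hm ha hb

theorem Real.cos_add_sub_sub_cos_mul_cos {x y : ℝ} (hx : Real.sin x ≠ 0) (hy : Real.sin y ≠ 0)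
    (δ : ℝ) :
    Real.cos (x + y - δ) - Real.cos x * Real.cos y =
      Real.sin x * Real.sin y * (-Real.cos δ + (Real.cot x + Real.cot y) * Real.sin δ -
        Real.cot x * Real.cot y * (1 - Real.cos δ)) := by
  rw [Real.cot_eq_cos_div_sin, Real.cot_eq_cos_div_sin, Real.cos_sub, Real.cos_add,
    Real.sin_add]
  field_simp
  ring

theorem sphere_thm_stmt7_general (y p' z : EuclideanSpace ℝ (Fin 3))
    (hy : ‖y‖ = 1) (hp' : ‖p'‖ = 1) (hz : ‖z‖ = 1) (ε : ℝ) (hε : 0 < ε)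
    (l₁' l₂' l₀' : ℝ) (hl₁ : l₁' = sDist p' y) (hl₂ : l₂' = sDist p' z)
    (hl₀ : l₀' = sDist y z)
    (h₁ : 0 < l₁') (h₁' : l₁' < π / 2) (h₂ : 0 < l₂') (h₂' : l₂' < π / 2)
    (h3ε : 3 * ε < l₁' + l₂')
    (hdeg : l₁' + l₂' - 3 * ε ≤ l₀') :
    Real.cos (sAngle p' y z) <
      -Real.cos (3 * ε) + (Real.cot l₁' + Real.cot l₂') * Real.sin (3 * ε) +
        Real.cot l₁' * Real.cot l₂' * (1 - Real.cos (3 * ε)) := by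
  have hs₁ : 0 < Real.sin l₁' := Real.sin_pos_of_pos_of_lt_pi h₁ (by linarith)
  have hs₂ : 0 < Real.sin l₂' := Real.sin_pos_of_pos_of_lt_pi h₂ (by linarith)
  have hcot : 0 < Real.cot l₁' * Real.cot l₂' := by
    have := Real.cos_pos_of_mem_Ioo ⟨by linarith, h₁'⟩
    have := Real.cos_pos_of_mem_Ioo ⟨by linarith, h₂'⟩
    rw [Real.cot_eq_cos_div_sin, Real.cot_eq_cos_div_sin]
    positivity
  have hcos3ε : Real.cos (3 * ε) < 1 := by
    simpa using Real.cos_lt_cos_of_nonneg_of_le_pi le_rfl (by linarith) (by linarith : 0 < 3 * ε)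
  have hcos₀ : Real.cos l₀' ≤ Real.cos (l₁' + l₂' - 3 * ε) :=
    Real.cos_le_cos_of_nonneg_of_le_pi (by linarith)
      (hl₀ ▸ InnerProductGeometry.angle_le_pi y z) hdeg
  have hlaw := sin_sDist_mul_sin_sDist_mul_cos_sAngle hp' hy hz
  rw [← hl₁, ← hl₂, ← hl₀] at hlaw
  have hbound : Real.cos (sAngle p' y z) ≤ -Real.cos (3 * ε) +
      (Real.cot l₁' + Real.cot l₂') * Real.sin (3 * ε) -
        Real.cot l₁' * Real.cot l₂' * (1 - Real.cos (3 * ε)) := by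
    refine le_of_mul_le_mul_left ?_ (mul_pos hs₁ hs₂)
    rw [hlaw, ← Real.cos_add_sub_sub_cos_mul_cos hs₁.ne' hs₂.ne']
    linarith
  linarith [mul_pos hcot (sub_pos.2 hcos3ε)]

/-- On `S²(1)`: for a triangle with vertices `ȳ, p̄', z̄` and sides
`l₁' = d(p̄',ȳ)`, `l₂' = d(p̄',z̄)`, `l₀' = d(ȳ,z̄)` with `l₀' ≥ l₁' + l₂' − 3ε`,
`0 < l₁', l₂' < π/2` and `3ε < l₁' + l₂' < π`, the angle at `p̄'` satisfies
`cos ∠p̄' < −cos 3ε + (cot l₁' + cot l₂')·sin 3ε + cot l₁'·cot l₂'·(1 − cos 3ε)`. -/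
theorem sphere_thm_stmt7 (y p' z : EuclideanSpace ℝ (Fin 3))
    (hy : ‖y‖ = 1) (hp' : ‖p'‖ = 1) (hz : ‖z‖ = 1) (ε : ℝ) (hε : 0 < ε)
    (l₁' l₂' l₀' : ℝ) (hl₁ : l₁' = sDist p' y) (hl₂ : l₂' = sDist p' z)
    (hl₀ : l₀' = sDist y z)
    (h₁ : 0 < l₁') (h₁' : l₁' < π / 2) (h₂ : 0 < l₂') (h₂' : l₂' < π / 2)
    (h3ε : 3 * ε < l₁' + l₂') (hsum : l₁' + l₂' < π)
    (hdeg : l₁' + l₂' - 3 * ε ≤ l₀') :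
    Real.cos (sAngle p' y z) <
      -Real.cos (3 * ε) + (Real.cot l₁' + Real.cot l₂') * Real.sin (3 * ε) +
        Real.cot l₁' * Real.cot l₂' * (1 - Real.cos (3 * ε)) :=
  sphere_thm_stmt7_general y p' z hy hp' hz ε hε l₁' l₂' l₀' hl₁ hl₂ hl₀ h₁ h₁' h₂ h₂' h3ε hdeg
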